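/- arXiv:1712.00565 — 5 statements merged into one kernel-verified Lean document; each statement's English description precedes it below -/
import Mathlib

section
/- Let X be a real Banach space, U ⊆ X open, and φ : U → ℝ a real-valued function. Suppose φ attains a local minimum or a local maximum at a point x₀ ∈ U, and suppose Jφ(x₀) ⊆ X* is a pseudo-Jacobian of φ at x₀. Then 0 belongs to the weak-star closed convex hull of Jφ(x₀) in X*. -/
open Filter Topology Metric Set Bornology

noncomputable section

/-- Upper right-hand Dini directional derivative of `φ` at `x` in direction `v`. -/
def diniUpper {X : Type*} [NormedAddCommGroup X] [NormedSpace ℝ X]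
    (φ : X → ℝ) (x v : X) : ℝ :=
  Filter.limsup (fun t : ℝ => (φ (x + t • v) - φ x) / t) (𝓝[>] (0 : ℝ))

/-- `J` is a pseudo-Jacobian of `f` at `x`: `J` is a nonempty set of bounded linear
operators such that for every continuous linear functional `p` on `Y` and every
direction `v`, the upper Dini derivative of `p ∘ f` at `x` in direction `v` is bounded
by `sup {p (T v) : T ∈ J}`. -/
def IsPseudoJacobianAt {X Y : Type*} [NormedAddCommGroup X] [NormedSpace ℝ X]
    [NormedAddCommGroup Y] [NormedSpace ℝ Y]
    (f : X → Y) (J : Set (X →L[ℝ] Y)) (x : X) : Prop :=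
  J.Nonempty ∧ ∀ (p : Y →L[ℝ] ℝ) (v : X),
    diniUpper (fun z => p (f z)) x v ≤ sSup ((fun T : X →L[ℝ] Y => p (T v)) '' J)

/-! If `0` were not in the weak-star closed convex hull of `J`, Hahn–Banach in the locally
convex space `σ(X*, X)` would separate them by a functional which, by the weak representation
theorem, is evaluation at some `v ∈ X`: then `T v < u < 0` for all `T ∈ J`. But at a local
minimum every Dini derivative is nonnegative, so the pseudo-Jacobian bound forces
`sup {T v : T ∈ J} ≥ 0`; a local maximum is reduced to this via `-φ` and the direction `-v`. -/

theorem Real.limsup_nonneg_of_eventually_nonneg {ι : Type*} {f : Filter ι} [f.NeBot]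
    {u : ι → ℝ} (h : ∀ᶠ i in f, 0 ≤ u i) : 0 ≤ limsup u f := by
  by_cases hbdd : f.IsBoundedUnder (· ≤ ·) u
  · refine le_limsup_of_le hbdd fun b hb => ?_
    obtain ⟨i, hi0, hib⟩ := (h.and hb).exists
    exact hi0.trans hib
  · -- an `ℝ`-valued `limsup` that is unbounded above takes the junk value `0`
    rw [Real.limsup_of_not_isBoundedUnder hbdd]

section

variable {X : Type*} [NormedAddCommGroup X] [NormedSpace ℝ X]

theorem IsLocalMin.diniUpper_nonneg {φ : X → ℝ} {x : X} (h : IsLocalMin φ x) (v : X) :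
    0 ≤ diniUpper φ x v := by
  have hline : Tendsto (fun t : ℝ => x + t • v) (𝓝[>] 0) (𝓝 x) :=
    ((continuous_const.add (continuous_id.smul continuous_const)).tendsto' 0 x
      (by simp)).mono_left nhdsWithin_le_nhds
  refine Real.limsup_nonneg_of_eventually_nonneg ?_
  filter_upwards [hline.eventually h, self_mem_nhdsWithin] with t hmin (ht : 0 < t)
  exact div_nonneg (sub_nonneg.2 hmin) ht.le

theorem IsPseudoJacobianAt.sSup_apply_nonneg_of_isLocalExtr {φ : X → ℝ}
    {J : Set (X →L[ℝ] ℝ)} {x : X} (hJ : IsPseudoJacobianAt φ J x) (hext : IsLocalExtr φ x)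
    (v : X) : 0 ≤ sSup ((fun T : X →L[ℝ] ℝ => T v) '' J) := by
  rcases hext with (hmin : IsLocalMin φ x) | (hmax : IsLocalMax φ x)
  · simpa using (hmin.diniUpper_nonneg v).trans (hJ.2 (.id ℝ ℝ) v)
  · simpa using (hmax.neg.diniUpper_nonneg (-v)).trans (hJ.2 (-.id ℝ ℝ) (-v))

theorem WeakDual.exists_eval_lt_of_zero_notMem_closure_convexHull {S : Set (WeakDual ℝ X)}
    (h : (0 : WeakDual ℝ X) ∉ closure (convexHull ℝ S)) :
    ∃ v : X, ∃ u < 0, ∀ T ∈ S, T v < u := by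
  have : LocallyConvexSpace ℝ (WeakDual ℝ X) := WeakBilin.locallyConvexSpace
  obtain ⟨f, u, hf0, hfS⟩ :=
    geometric_hahn_banach_point_closed (convex_convexHull ℝ S).closure isClosed_closure h
  obtain ⟨v, hv⟩ := LinearMap.dualEmbedding_surjective (topDualPairing ℝ X) f
  have hf : ∀ T : WeakDual ℝ X, f T = T v := fun T => by subst hv; rfl
  rw [map_zero] at hf0
  refine ⟨-v, -u, neg_lt_zero.2 hf0, fun T hT => ?_⟩
  have hTu := hfS T (subset_closure (subset_convexHull ℝ S hT))
  rw [hf] at hTu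
  rw [map_neg]
  linarith

end

theorem optimality_condition_general
    {X : Type*} [NormedAddCommGroup X] [NormedSpace ℝ X]
    {φ : X → ℝ} {x₀ : X}
    (hext : IsLocalMin φ x₀ ∨ IsLocalMax φ x₀)
    {J : Set (X →L[ℝ] ℝ)} (hJ : IsPseudoJacobianAt φ J x₀) :
    (0 : WeakDual ℝ X) ∈ closure (convexHull ℝ
      ((StrongDual.toWeakDual : (X →L[ℝ] ℝ) → WeakDual ℝ X) '' J)) := by
  by_contra h0
  obtain ⟨v, u, hu, hlt⟩ := WeakDual.exists_eval_lt_of_zero_notMem_closure_convexHull h0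
  have hsup : sSup ((fun T : X →L[ℝ] ℝ => T v) '' J) ≤ u :=
    csSup_le (hJ.1.image _) (forall_mem_image.2 fun T hT => (hlt _ (mem_image_of_mem _ hT)).le)
  linarith [hJ.sSup_apply_nonneg_of_isLocalExtr hext v]

/-- Optimality condition: if `φ` attains a local minimum or maximum at `x₀` and
`J` is a pseudo-Jacobian of `φ` at `x₀`, then `0` belongs to the weak-star closed
convex hull of `J` in the dual space. -/
theorem optimality_condition
    {X : Type*} [NormedAddCommGroup X] [NormedSpace ℝ X] [CompleteSpace X]
    {U : Set X} (hUopen : IsOpen U)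
    {φ : X → ℝ} {x₀ : X} (hx₀ : x₀ ∈ U)
    (hext : IsLocalMin φ x₀ ∨ IsLocalMax φ x₀)
    {J : Set (X →L[ℝ] ℝ)} (hJ : IsPseudoJacobianAt φ J x₀) :
    (0 : WeakDual ℝ X) ∈ closure (convexHull ℝ
      ((StrongDual.toWeakDual : (X →L[ℝ] ℝ) → WeakDual ℝ X) '' J)) :=
  optimality_condition_general hext hJ

end
end

section
/- Let X, Y, Z be real Banach spaces, U ⊆ X open, f : U → Y and g : Y → Z continuous maps, and x ∈ U. If f is Gâteaux differentiable at x and g is weakly Gâteaux differentiable at f(x) and locally Lipschitz at f(x), then g ∘ f is weakly Gâteaux differentiable at x and (g∘f)'(x) = g'(f(x)) ∘ f'(x). -/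
open Filter Topology Metric Set Bornology

noncomputable section

/-- `f` is Gâteaux differentiable at `x` with derivative `f'`. -/
def HasGateauxDerivAt {X Y : Type*} [NormedAddCommGroup X] [NormedSpace ℝ X]
    [NormedAddCommGroup Y] [NormedSpace ℝ Y]
    (f : X → Y) (f' : X →L[ℝ] Y) (x : X) : Prop :=
  ∀ v : X, Filter.Tendsto (fun t : ℝ => t⁻¹ • (f (x + t • v) - f x))
    (𝓝[≠] (0 : ℝ)) (𝓝 (f' v))

/-- `g` is weakly Gâteaux differentiable at `y` with derivative `g'`: for every
direction `w` and every continuous linear functional `p`,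
`p ((g (y + t w) − g y)/t) → p (g' w)` as `t → 0`. -/
def HasWeakGateauxDerivAt {Y Z : Type*} [NormedAddCommGroup Y] [NormedSpace ℝ Y]
    [NormedAddCommGroup Z] [NormedSpace ℝ Z]
    (g : Y → Z) (g' : Y →L[ℝ] Z) (y : Y) : Prop :=
  ∀ (w : Y) (p : Z →L[ℝ] ℝ),
    Filter.Tendsto (fun t : ℝ => p (t⁻¹ • (g (y + t • w) - g y)))
      (𝓝[≠] (0 : ℝ)) (𝓝 (p (g' w)))

/-- If `f` is Gâteaux differentiable at `x` and `g` is weakly Gâteaux differentiable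
and locally Lipschitz at `f x`, then `g ∘ f` is weakly Gâteaux differentiable at `x`
with derivative `g'(f x) ∘ f'(x)`. -/
theorem weak_gateaux_chain_rule
    {X Y Z : Type*} [NormedAddCommGroup X] [NormedSpace ℝ X] [CompleteSpace X]
    [NormedAddCommGroup Y] [NormedSpace ℝ Y] [CompleteSpace Y]
    [NormedAddCommGroup Z] [NormedSpace ℝ Z] [CompleteSpace Z]
    {U : Set X} (hUopen : IsOpen U)
    {f : X → Y} (hf : ContinuousOn f U)
    {g : Y → Z} (hg : Continuous g)
    {x : X} (hx : x ∈ U)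
    {f' : X →L[ℝ] Y} (hf' : HasGateauxDerivAt f f' x)
    {g' : Y →L[ℝ] Z} (hg' : HasWeakGateauxDerivAt g g' (f x))
    (hlip : ∃ L : ℝ, ∃ r > 0, ∀ u ∈ Metric.ball (f x) r, ∀ v ∈ Metric.ball (f x) r,
      ‖g u - g v‖ ≤ L * ‖u - v‖) :
    HasWeakGateauxDerivAt (g ∘ f) (g'.comp f') x := by
  intro w p
  obtain ⟨L, r, hr, hL⟩ := hlip
  set L' := max L 0 with hL'def
  have hL'0 : 0 ≤ L' := le_max_right _ _
  have hLip : ∀ u ∈ Metric.ball (f x) r, ∀ v ∈ Metric.ball (f x) r,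
      ‖g u - g v‖ ≤ L' * ‖u - v‖ := fun u hu v hv =>
    (hL u hu v hv).trans (mul_le_mul_of_nonneg_right (le_max_left _ _) (norm_nonneg _))
  have hfw := hf' w
  -- f (x + t • w) → f x
  have h1 : Tendsto (fun t : ℝ => f (x + t • w)) (𝓝[≠] 0) (𝓝 (f x)) := by
    have h : Tendsto (fun t : ℝ => t • (t⁻¹ • (f (x + t • w) - f x)) + f x) (𝓝[≠] 0)
        (𝓝 ((0 : ℝ) • f' w + f x)) :=
      ((tendsto_id.mono_left nhdsWithin_le_nhds).smul hfw).add tendsto_const_nhds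
    rw [zero_smul, zero_add] at h
    refine h.congr' ?_
    filter_upwards [self_mem_nhdsWithin] with t ht
    have ht' : (t : ℝ) ≠ 0 := ht
    rw [smul_inv_smul₀ ht', sub_add_cancel]
  have h2 : Tendsto (fun t : ℝ => f x + t • f' w) (𝓝[≠] 0) (𝓝 (f x)) := by
    have h : Tendsto (fun t : ℝ => f x + t • f' w) (𝓝 (0 : ℝ))
        (𝓝 (f x + (0 : ℝ) • f' w)) :=
      tendsto_const_nhds.add (tendsto_id.smul tendsto_const_nhds)
    rw [zero_smul, add_zero] at h
    exact h.mono_left nhdsWithin_le_nhds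
  have hball : ∀ᶠ t : ℝ in 𝓝[≠] 0, f (x + t • w) ∈ Metric.ball (f x) r ∧
      f x + t • f' w ∈ Metric.ball (f x) r :=
    (h1.eventually (Metric.ball_mem_nhds (f x) hr)).and
      (h2.eventually (Metric.ball_mem_nhds (f x) hr))
  set A : ℝ → ℝ := fun t => p (t⁻¹ • (g (f (x + t • w)) - g (f x + t • f' w))) with hA_def
  set B : ℝ → ℝ := fun t => p (t⁻¹ • (g (f x + t • f' w) - g (f x))) with hB_def
  have hB : Tendsto B (𝓝[≠] 0) (𝓝 (p (g' (f' w)))) := hg' (f' w) p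
  have hA : Tendsto A (𝓝[≠] 0) (𝓝 0) := by
    have hbound : ∀ᶠ t : ℝ in 𝓝[≠] 0,
        ‖A t‖ ≤ ‖p‖ * (L' * ‖t⁻¹ • (f (x + t • w) - f x) - f' w‖) := by
      filter_upwards [hball, self_mem_nhdsWithin] with t hmem ht
      have ht' : (t : ℝ) ≠ 0 := ht
      have key : f (x + t • w) - (f x + t • f' w) =
          t • (t⁻¹ • (f (x + t • w) - f x) - f' w) := by
        rw [smul_sub, smul_inv_smul₀ ht']
        abel
      calc ‖A t‖ ≤ ‖p‖ * ‖t⁻¹ • (g (f (x + t • w)) - g (f x + t • f' w))‖ :=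
            p.le_opNorm _
        _ = ‖p‖ * (|t|⁻¹ * ‖g (f (x + t • w)) - g (f x + t • f' w)‖) := by
            rw [norm_smul, norm_inv, Real.norm_eq_abs]
        _ ≤ ‖p‖ * (|t|⁻¹ * (L' * ‖f (x + t • w) - (f x + t • f' w)‖)) := by
            gcongr
            exact hLip _ hmem.1 _ hmem.2
        _ = ‖p‖ * (L' * ‖t⁻¹ • (f (x + t • w) - f x) - f' w‖) := by
            rw [key, norm_smul, Real.norm_eq_abs]
            field_simp
    have htend : Tendsto (fun t : ℝ => ‖p‖ * (L' * ‖t⁻¹ • (f (x + t • w) - f x) - f' w‖))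
        (𝓝[≠] 0) (𝓝 (‖p‖ * (L' * 0))) := by
      refine tendsto_const_nhds.mul (tendsto_const_nhds.mul ?_)
      have := (hfw.sub (tendsto_const_nhds (x := f' w))).norm
      simpa using this
    rw [mul_zero, mul_zero] at htend
    exact squeeze_zero_norm' hbound htend
  have heq : (fun t : ℝ => p (t⁻¹ • ((g ∘ f) (x + t • w) - (g ∘ f) x)))
      = fun t => A t + B t := by
    funext t
    simp only [Function.comp_apply, hA_def, hB_def, ← map_add, ← smul_add,
      sub_add_sub_cancel]
  rw [heq]
  have : Tendsto (fun t => A t + B t) (𝓝[≠] 0) (𝓝 (0 + p (g' (f' w)))) := hA.add hB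
  rw [zero_add] at this
  simpa using this

end
end

section
/- Let X, Y be real Banach spaces, U ⊆ X open, and f : U → Y a continuous map which is Gâteaux differentiable at every point of U. Then the pseudo-Jacobian mapping Jf defined by Jf(x) = {f'(x)} for x ∈ U satisfies the chain rule condition on U. -/
open Filter Topology Metric Set Bornology

noncomputable section

/-- Clarke generalized directional derivative of `φ` at `y` in direction `w`:
`limsup_{z → y, t → 0⁺} (φ (z + t w) − φ z)/t`. -/
def clarkeDirDeriv {Y : Type*} [NormedAddCommGroup Y] [NormedSpace ℝ Y]
    (φ : Y → ℝ) (y w : Y) : ℝ :=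
  Filter.limsup (fun q : Y × ℝ => (φ (q.1 + q.2 • w) - φ q.1) / q.2)
    ((𝓝 y) ×ˢ (𝓝[>] (0 : ℝ)))

/-- Clarke subdifferential of `φ` at `y`. -/
def clarkeSubdiff {Y : Type*} [NormedAddCommGroup Y] [NormedSpace ℝ Y]
    (φ : Y → ℝ) (y : Y) : Set (Y →L[ℝ] ℝ) :=
  {p | ∀ w : Y, p w ≤ clarkeDirDeriv φ y w}

/-- The set `A_{x,y}(f) = ∂‖·‖(f x − y) ∘ co (Jf x) ⊆ X*`. -/
def pjComp {X Y : Type*} [NormedAddCommGroup X] [NormedSpace ℝ X]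
    [NormedAddCommGroup Y] [NormedSpace ℝ Y]
    (f : X → Y) (Jf : X → Set (X →L[ℝ] Y)) (x : X) (y : Y) : Set (X →L[ℝ] ℝ) :=
  {S | ∃ p ∈ clarkeSubdiff (fun w : Y => ‖w‖) (f x - y),
       ∃ T ∈ convexHull ℝ (Jf x), S = p.comp T}

/-- The pseudo-Jacobian mapping `Jf` satisfies the chain rule condition on `U`:
for every `x ∈ U` and every `y ≠ f x`, the set `A_{x,y}(f)` is weak-star closed,
convex, and is a pseudo-Jacobian at `x` of the function `z ↦ ‖f z − y‖`. -/
def ChainRuleCond {X Y : Type*} [NormedAddCommGroup X] [NormedSpace ℝ X]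
    [NormedAddCommGroup Y] [NormedSpace ℝ Y]
    (f : X → Y) (Jf : X → Set (X →L[ℝ] Y)) (U : Set X) : Prop :=
  ∀ x ∈ U, ∀ y : Y, y ≠ f x →
    IsClosed ((StrongDual.toWeakDual : (X →L[ℝ] ℝ) → WeakDual ℝ X) ''
        pjComp f Jf x y) ∧
    Convex ℝ (pjComp f Jf x y) ∧
    IsPseudoJacobianAt (fun z : X => ‖f z - y‖) (pjComp f Jf x y) x

/-!
Write `u = f x - y` and `N_u w = lim_{t → 0⁺} (‖u + t • w‖ - ‖u‖) / t` (`normDirDeriv u w`),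
the one-sided directional derivative of the norm, which exists because `t ↦ ‖u + t • w‖` is
convex. `N_u` is sublinear, bounded by `‖w‖`, and lies below the Clarke derivative of the norm
at `u`. Gâteaux differentiability turns the Dini derivative of `z ↦ p ‖f z - y‖` in direction `v`
into the limit `p (N_u (f' x v))`, and Hahn–Banach gives a functional `q ≤ N_u` with
`q (f' x v) = N_u (f' x v)`; such a `q` lies in `∂‖·‖(u)`, so `q ∘ f' x` attains the required
supremum. For weak-star closedness, `∂‖·‖(u)` is weak-star closed and contained in the unit
ball, hence weak-star compact by Banach–Alaoglu, and precomposition with `f' x` is weak-star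
continuous.
-/

section NormDirDeriv

variable {Y : Type*} [NormedAddCommGroup Y] [NormedSpace ℝ Y]

theorem tendsto_const_mul_nhdsGT_zero {c : ℝ} (hc : 0 < c) :
    Tendsto (c * ·) (𝓝[>] (0 : ℝ)) (𝓝[>] 0) :=
  tendsto_comap.mono_left (comap_mulLeft_nhdsGT_zero hc).ge

def normDirDeriv (u z : Y) : ℝ := derivWithin (fun t : ℝ => ‖u + t • z‖) (Ioi 0) 0

theorem convexOn_norm_add_smul (u z : Y) : ConvexOn ℝ univ (fun t : ℝ => ‖u + t • z‖) := by
  refine ⟨convex_univ, fun s _ t _ a b ha hb hab => ?_⟩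
  have hline : u + (a • s + b • t) • z = a • (u + s • z) + b • (u + t • z) := by
    linear_combination (norm := module) -(hab • u)
  show ‖u + (a • s + b • t) • z‖ ≤ a • ‖u + s • z‖ + b • ‖u + t • z‖
  rw [hline]
  exact (convexOn_norm convex_univ).2 (mem_univ _) (mem_univ _) ha hb hab

theorem tendsto_normDirDeriv (u z : Y) :
    Tendsto (fun t : ℝ => (‖u + t • z‖ - ‖u‖) / t) (𝓝[>] 0) (𝓝 (normDirDeriv u z)) := by
  have h := (convexOn_norm_add_smul u z).hasDerivWithinAt_rightDeriv_of_mem_interior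
    (by simp : (0 : ℝ) ∈ interior univ)
  rw [hasDerivWithinAt_iff_tendsto_slope' self_notMem_Ioi] at h
  exact h.congr fun t => by simp [slope_def_field]

theorem normDirDeriv_zero_right (u : Y) : normDirDeriv u 0 = 0 := by
  simp [normDirDeriv]

theorem normDirDeriv_smul (u z : Y) {c : ℝ} (hc : 0 < c) :
    normDirDeriv u (c • z) = c * normDirDeriv u z := by
  refine tendsto_nhds_unique (tendsto_normDirDeriv u (c • z)) ?_
  refine (((tendsto_normDirDeriv u z).comp (tendsto_const_mul_nhdsGT_zero hc)).const_mul
    c).congr' ?_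
  filter_upwards [self_mem_nhdsWithin] with t (ht : 0 < t)
  simp only [Function.comp_apply, smul_smul, mul_comm t c]
  field_simp

theorem normDirDeriv_add_le (u z₁ z₂ : Y) :
    normDirDeriv u (z₁ + z₂) ≤ normDirDeriv u z₁ + normDirDeriv u z₂ := by
  have hdouble := tendsto_const_mul_nhdsGT_zero (two_pos : (0 : ℝ) < 2)
  refine le_of_tendsto_of_tendsto (tendsto_normDirDeriv u (z₁ + z₂))
    (((tendsto_normDirDeriv u z₁).comp hdouble).add ((tendsto_normDirDeriv u z₂).comp hdouble)) ?_
  filter_upwards [self_mem_nhdsWithin] with t (ht : 0 < t)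
  have hmid : ‖u + t • (z₁ + z₂)‖
      ≤ (1 / 2 : ℝ) • ‖u + (2 * t) • z₁‖ + (1 / 2 : ℝ) • ‖u + (2 * t) • z₂‖ := by
    have hline : u + t • (z₁ + z₂)
        = (1 / 2 : ℝ) • (u + (2 * t) • z₁) + (1 / 2 : ℝ) • (u + (2 * t) • z₂) := by
      module
    rw [hline]
    exact (convexOn_norm convex_univ).2 (mem_univ _) (mem_univ _) (by norm_num) (by norm_num)
      (by norm_num)
  simp only [Function.comp_apply, smul_eq_mul] at hmid ⊢
  rw [← add_div, div_le_div_iff₀ ht (by positivity)]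
  nlinarith

theorem mul_normDirDeriv_le (u z : Y) (c : ℝ) : c * normDirDeriv u z ≤ normDirDeriv u (c • z) := by
  rcases lt_trichotomy c 0 with hc | rfl | hc
  · have hsum := normDirDeriv_add_le u z (-z)
    rw [add_neg_cancel, normDirDeriv_zero_right] at hsum
    rw [← neg_neg c, neg_smul, ← smul_neg, normDirDeriv_smul u (-z) (neg_pos.2 hc)]
    nlinarith
  · simp [normDirDeriv_zero_right]
  · rw [normDirDeriv_smul u z hc]

theorem abs_norm_add_smul_sub_norm_div_le (u z : Y) {t : ℝ} (ht : 0 < t) :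
    |(‖u + t • z‖ - ‖u‖) / t| ≤ ‖z‖ := by
  rw [abs_div, abs_of_pos ht, div_le_iff₀ ht]
  calc |‖u + t • z‖ - ‖u‖| ≤ ‖t • z‖ := by simpa using abs_norm_sub_norm_le (u + t • z) u
    _ = ‖z‖ * t := by rw [norm_smul_of_nonneg ht.le, mul_comm]

theorem normDirDeriv_le_div (u z : Y) {t : ℝ} (ht : 0 < t) :
    normDirDeriv u z ≤ (‖u + t • z‖ - ‖u‖) / t := by
  have h := (convexOn_norm_add_smul u z).rightDeriv_le_slope_of_mem_interior
    (by simp : (0 : ℝ) ∈ interior univ) (mem_univ t) ht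
  simpa [normDirDeriv, slope_def_field] using h

theorem normDirDeriv_le_norm (u z : Y) : normDirDeriv u z ≤ ‖z‖ :=
  le_of_tendsto (tendsto_normDirDeriv u z) <| by
    filter_upwards [self_mem_nhdsWithin] with t (ht : 0 < t)
    exact (le_abs_self _).trans (abs_norm_add_smul_sub_norm_div_le u z ht)

end NormDirDeriv

section ClarkeSubdiff

variable {Y : Type*} [NormedAddCommGroup Y] [NormedSpace ℝ Y]

theorem convex_clarkeSubdiff (φ : Y → ℝ) (y : Y) : Convex ℝ (clarkeSubdiff φ y) := by
  intro p hp q hq a b ha hb hab w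
  calc (a • p + b • q) w = a * p w + b * q w := rfl
    _ ≤ a * clarkeDirDeriv φ y w + b * clarkeDirDeriv φ y w := by
        gcongr
        exacts [hp w, hq w]
    _ = clarkeDirDeriv φ y w := by rw [← add_mul, hab, one_mul]

theorem isClosed_toWeakDual_image_clarkeSubdiff (φ : Y → ℝ) (y : Y) :
    IsClosed (StrongDual.toWeakDual '' clarkeSubdiff φ y) := by
  have hcap : StrongDual.toWeakDual '' clarkeSubdiff φ y
      = ⋂ w : Y, {p : WeakDual ℝ Y | p w ≤ clarkeDirDeriv φ y w} := by
    ext p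
    simp only [mem_iInter]
    exact ⟨fun ⟨q, hq, hqp⟩ => hqp ▸ hq, fun hp => ⟨WeakDual.toStrongDual p, hp, rfl⟩⟩
  rw [hcap]
  exact isClosed_iInter fun w => isClosed_le (WeakDual.eval_continuous w) continuous_const

theorem eventually_abs_norm_add_smul_sub_norm_div_le (u z : Y) :
    ∀ᶠ q : Y × ℝ in 𝓝 u ×ˢ 𝓝[>] 0, |(‖q.1 + q.2 • z‖ - ‖q.1‖) / q.2| ≤ ‖z‖ := by
  filter_upwards [prod_mem_prod univ_mem self_mem_nhdsWithin] with q hq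
  exact abs_norm_add_smul_sub_norm_div_le q.1 z hq.2

theorem clarkeDirDeriv_norm_le (u z : Y) : clarkeDirDeriv (fun w : Y => ‖w‖) u z ≤ ‖z‖ := by
  have hbound := eventually_abs_norm_add_smul_sub_norm_div_le u z
  refine limsup_le_of_le (isCoboundedUnder_le_of_eventually_le _ (x := -‖z‖) ?_) ?_
  · filter_upwards [hbound] with q hq using (abs_le.1 hq).1
  · filter_upwards [hbound] with q hq using (abs_le.1 hq).2

theorem normDirDeriv_le_clarkeDirDeriv_norm (u z : Y) :
    normDirDeriv u z ≤ clarkeDirDeriv (fun w : Y => ‖w‖) u z := by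
  have hbdd : IsBoundedUnder (· ≤ ·) (𝓝 u ×ˢ 𝓝[>] 0)
      (fun q : Y × ℝ => (‖q.1 + q.2 • z‖ - ‖q.1‖) / q.2) :=
    ⟨‖z‖, eventually_map.2 <| (eventually_abs_norm_add_smul_sub_norm_div_le u z).mono
      fun q hq => (abs_le.1 hq).2⟩
  have hpath : Tendsto (fun t : ℝ => (u, t)) (𝓝[>] 0) (𝓝 u ×ˢ 𝓝[>] 0) :=
    tendsto_const_nhds.prodMk tendsto_id
  refine le_limsup_of_frequently_le (hpath.frequently (Eventually.frequently ?_)) hbdd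
  filter_upwards [self_mem_nhdsWithin] with t (ht : 0 < t)
  exact normDirDeriv_le_div u z ht

theorem norm_le_one_of_mem_clarkeSubdiff_norm {u : Y} {q : StrongDual ℝ Y}
    (hq : q ∈ clarkeSubdiff (fun w : Y => ‖w‖) u) : ‖q‖ ≤ 1 := by
  refine ContinuousLinearMap.opNorm_le_bound _ zero_le_one fun z => ?_
  rw [one_mul, Real.norm_eq_abs, abs_le]
  constructor
  · have h := (hq (-z)).trans (clarkeDirDeriv_norm_le u (-z))
    rw [map_neg, norm_neg] at h
    linarith
  · exact (hq z).trans (clarkeDirDeriv_norm_le u z)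

theorem isCompact_toWeakDual_image_clarkeSubdiff_norm (u : Y) :
    IsCompact (StrongDual.toWeakDual '' clarkeSubdiff (fun w : Y => ‖w‖) u) :=
  (WeakDual.isCompact_closedBall (0 : StrongDual ℝ Y) 1).of_isClosed_subset
    (isClosed_toWeakDual_image_clarkeSubdiff _ u) <| by
      rintro _ ⟨q, hq, rfl⟩
      simpa using norm_le_one_of_mem_clarkeSubdiff_norm hq

theorem exists_mem_clarkeSubdiff_norm_apply_eq (u z : Y) :
    ∃ q ∈ clarkeSubdiff (fun w : Y => ‖w‖) u, q z = normDirDeriv u z := by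
  have hker : ∀ c : ℝ, c • z = 0 → RingHom.id ℝ c • normDirDeriv u z = 0 := by
    intro c hc
    rcases smul_eq_zero.1 hc with rfl | rfl
    · simp
    · simp [normDirDeriv_zero_right]
  set g₀ := LinearPMap.mkSpanSingleton' z (normDirDeriv u z) hker
  have hg₀ : ∀ w : g₀.domain, g₀ w ≤ normDirDeriv u w := by
    rintro ⟨w, hw⟩
    obtain ⟨c, rfl⟩ := Submodule.mem_span_singleton.1 hw
    rw [LinearPMap.mkSpanSingleton'_apply]
    exact mul_normDirDeriv_le u z c
  obtain ⟨g, hgext, hgle⟩ := exists_extension_of_le_sublinear g₀ (normDirDeriv u)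
    (fun c hc w => normDirDeriv_smul u w hc) (normDirDeriv_add_le u) hg₀
  have hgnorm : ∀ w : Y, ‖g w‖ ≤ 1 * ‖w‖ := by
    intro w
    rw [one_mul, Real.norm_eq_abs, abs_le]
    constructor
    · have h := (hgle (-w)).trans (normDirDeriv_le_norm u (-w))
      rw [map_neg, norm_neg] at h
      linarith
    · exact (hgle w).trans (normDirDeriv_le_norm u w)
  refine ⟨g.mkContinuous 1 hgnorm, fun w => (hgle w).trans
    (normDirDeriv_le_clarkeDirDeriv_norm u w), ?_⟩
  exact (hgext ⟨z, Submodule.mem_span_singleton_self z⟩).trans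
    (LinearPMap.mkSpanSingleton'_apply_self _ _ _ _)

end ClarkeSubdiff

section ChainRule

variable {X Y : Type*} [NormedAddCommGroup X] [NormedSpace ℝ X]
  [NormedAddCommGroup Y] [NormedSpace ℝ Y]

theorem tendsto_norm_slope_of_tendsto_slope {γ : ℝ → Y} {w : Y}
    (hγ : Tendsto (fun t : ℝ => t⁻¹ • (γ t - γ 0)) (𝓝[>] 0) (𝓝 w)) :
    Tendsto (fun t : ℝ => (‖γ t‖ - ‖γ 0‖) / t) (𝓝[>] 0) (𝓝 (normDirDeriv (γ 0) w)) := by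
  have herr : Tendsto (fun t : ℝ => (‖γ t‖ - ‖γ 0‖) / t - (‖γ 0 + t • w‖ - ‖γ 0‖) / t)
      (𝓝[>] 0) (𝓝 0) := by
    refine squeeze_zero_norm' ?_ (tendsto_iff_norm_sub_tendsto_zero.1 hγ)
    filter_upwards [self_mem_nhdsWithin] with t (ht : 0 < t)
    rw [Real.norm_eq_abs, ← sub_div, abs_div, abs_of_pos ht, div_le_iff₀ ht]
    calc |‖γ t‖ - ‖γ 0‖ - (‖γ 0 + t • w‖ - ‖γ 0‖)| = |‖γ t‖ - ‖γ 0 + t • w‖| := by ring_nf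
      _ ≤ ‖γ t - (γ 0 + t • w)‖ := abs_norm_sub_norm_le _ _
      _ = ‖t • (t⁻¹ • (γ t - γ 0) - w)‖ := by
        rw [smul_sub, smul_inv_smul₀ ht.ne', sub_add_eq_sub_sub]
      _ = ‖t⁻¹ • (γ t - γ 0) - w‖ * t := by rw [norm_smul_of_nonneg ht.le, mul_comm]
  simpa using (tendsto_normDirDeriv (γ 0) w).add herr

theorem HasGateauxDerivAt.diniUpper_comp_norm_sub {f : X → Y} {f' : X →L[ℝ] Y} {x : X}
    (hf : HasGateauxDerivAt f f' x) (p : ℝ →L[ℝ] ℝ) (y : Y) (v : X) :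
    diniUpper (fun z => p ‖f z - y‖) x v = p (normDirDeriv (f x - y) (f' v)) := by
  have hγ : Tendsto (fun t : ℝ => t⁻¹ • ((f (x + t • v) - y) - (f (x + (0 : ℝ) • v) - y)))
      (𝓝[>] 0) (𝓝 (f' v)) := by
    simpa using (hf v).mono_left (nhdsGT_le_nhdsNE 0)
  have h := (p.continuous.tendsto _).comp (tendsto_norm_slope_of_tendsto_slope hγ)
  simp only [zero_smul, add_zero] at h
  refine Tendsto.limsup_eq (h.congr fun t => ?_)
  rw [Function.comp_apply, div_eq_inv_mul, div_eq_inv_mul, ← smul_eq_mul, map_smul, map_sub,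
    smul_eq_mul]

theorem HasGateauxDerivAt.isPseudoJacobianAt_norm_sub {f : X → Y} {f' : X →L[ℝ] Y} {x : X}
    (hf : HasGateauxDerivAt f f' x) (y : Y) :
    IsPseudoJacobianAt (fun z => ‖f z - y‖)
      ((fun q : StrongDual ℝ Y => q.comp f') '' clarkeSubdiff (fun w : Y => ‖w‖) (f x - y)) x := by
  obtain ⟨q₀, hq₀, -⟩ := exists_mem_clarkeSubdiff_norm_apply_eq (f x - y) 0
  refine ⟨⟨q₀.comp f', mem_image_of_mem _ hq₀⟩, fun p v => ?_⟩
  obtain ⟨q, hq, hqv⟩ := exists_mem_clarkeSubdiff_norm_apply_eq (f x - y) (f' v)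
  rw [hf.diniUpper_comp_norm_sub p y v, ← hqv]
  refine le_csSup ⟨‖p‖ * ‖f' v‖, ?_⟩ ⟨q.comp f', mem_image_of_mem _ hq, rfl⟩
  rintro _ ⟨_, ⟨q', hq', rfl⟩, rfl⟩
  calc p (q' (f' v)) ≤ ‖p‖ * ‖q' (f' v)‖ := (le_abs_self _).trans (p.le_opNorm _)
    _ ≤ ‖p‖ * ‖f' v‖ := by
      gcongr
      simpa using q'.le_of_opNorm_le (norm_le_one_of_mem_clarkeSubdiff_norm hq') (f' v)

theorem IsCompact.isClosed_toWeakDual_image_comp {S : Set (StrongDual ℝ Y)}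
    (hS : IsCompact (StrongDual.toWeakDual '' S)) (T : X →L[ℝ] Y) :
    IsClosed (StrongDual.toWeakDual '' ((fun q : StrongDual ℝ Y => q.comp T) '' S)) := by
  have hcont : Continuous fun p : WeakDual ℝ Y =>
      StrongDual.toWeakDual ((WeakDual.toStrongDual p).comp T) :=
    WeakDual.continuous_of_continuous_eval fun v => WeakDual.eval_continuous (T v)
  have h := (hS.image hcont).isClosed
  rwa [image_image] at h ⊢

theorem pjComp_singleton (f : X → Y) (f' : X → X →L[ℝ] Y) (x : X) (y : Y) :
    pjComp f (fun x => {f' x}) x y =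
      (fun q : StrongDual ℝ Y => q.comp (f' x)) '' clarkeSubdiff (fun w : Y => ‖w‖) (f x - y) := by
  ext S
  simp [pjComp, convexHull_singleton, eq_comm]

end ChainRule

theorem gateaux_singleton_chainRuleCond_general
    {X Y : Type*} [NormedAddCommGroup X] [NormedSpace ℝ X]
    [NormedAddCommGroup Y] [NormedSpace ℝ Y]
    {U : Set X}
    {f : X → Y}
    {f' : X → X →L[ℝ] Y} (hf' : ∀ x ∈ U, HasGateauxDerivAt f (f' x) x) :
    ChainRuleCond f (fun x : X => {f' x}) U := by
  intro x hx y _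
  rw [pjComp_singleton]
  exact ⟨(isCompact_toWeakDual_image_clarkeSubdiff_norm (f x - y)).isClosed_toWeakDual_image_comp
      (f' x),
    (convex_clarkeSubdiff _ _).linear_image
      ((ContinuousLinearMap.compL ℝ X Y ℝ).flip (f' x)).toLinearMap,
    (hf' x hx).isPseudoJacobianAt_norm_sub y⟩

/-- If `f` is continuous and Gâteaux differentiable on the open set `U`, then the
singleton pseudo-Jacobian mapping `x ↦ {f'(x)}` satisfies the chain rule condition. -/
theorem gateaux_singleton_chainRuleCond
    {X Y : Type*} [NormedAddCommGroup X] [NormedSpace ℝ X] [CompleteSpace X]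
    [NormedAddCommGroup Y] [NormedSpace ℝ Y] [CompleteSpace Y]
    {U : Set X} (hUopen : IsOpen U)
    {f : X → Y} (hf : ContinuousOn f U)
    {f' : X → X →L[ℝ] Y} (hf' : ∀ x ∈ U, HasGateauxDerivAt f (f' x) x) :
    ChainRuleCond f (fun x : X => {f' x}) U :=
  gateaux_singleton_chainRuleCond_general hf'

end
end

section
/- Let X, Y be real Banach spaces, U ⊆ X open, and f : U → Y a continuous map which is Gâteaux differentiable at every point of U. Assume that for every x ∈ U the derivative f'(x) admits a right inverse R(x) ∈ L(Y,X), i.e., f'(x) ∘ R(x) = Id_Y, and that κ := sup_{x ∈ U} ‖R(x)‖ < ∞. Then for every open ball B(x₀, δ) ⊆ U one has B(f(x₀), δ/κ) ⊆ f(B(x₀, δ)); in particular f(U) is open in Y and f is an open map. -/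
open Filter Topology Metric Set Bornology

noncomputable section

/-!
Ekeland's variational principle, applied on a closed ball `K` around `x₀` to the residual
`z ↦ ‖f z - y‖` with a slope `ε < 1/κ`, yields a point `x̄ ∈ K` that is an `ε`-approximate
minimiser and lies in the interior of `K`. If `f x̄ ≠ y`, moving from `x̄` along the Newton
direction `R x̄ (y - f x̄)`, of length at most `κ ‖f x̄ - y‖`, decreases the residual at rate `1`,
faster than the rate `ε κ` that `ε`-minimality allows. Hence `f x̄ = y`.
-/

section Ekeland

variable {α : Type*} [MetricSpace α] {F : α → ℝ} {ε : ℝ}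

lemma exists_almost_min_of_add_dist_le (hF : BddBelow (range F)) (z : α) {η : ℝ} (hη : 0 < η) :
    ∃ w, F w + ε * dist w z ≤ F z ∧ ∀ x, F x + ε * dist x z ≤ F z → F w ≤ F x + η := by
  set S := {x | F x + ε * dist x z ≤ F z}
  have hzS : z ∈ S := by simp [S]
  obtain ⟨_, ⟨w, hwS, rfl⟩, hw⟩ := exists_lt_of_csInf_lt ⟨F z, mem_image_of_mem F hzS⟩
    (lt_add_of_pos_right (sInf (F '' S)) hη)
  refine ⟨w, hwS, fun x hx => ?_⟩
  linarith [csInf_le (hF.mono (image_subset_range F S)) (mem_image_of_mem F hx)]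

variable {u : ℕ → α}

lemma add_dist_le_of_chain (hε : 0 ≤ ε)
    (hu : ∀ n, F (u (n + 1)) + ε * dist (u (n + 1)) (u n) ≤ F (u n)) {m n : ℕ} (hmn : m ≤ n) :
    F (u n) + ε * dist (u n) (u m) ≤ F (u m) := by
  induction n, hmn using Nat.le_induction with
  | base => simp
  | succ n _ ih =>
    have := mul_le_mul_of_nonneg_left (dist_triangle (u (n + 1)) (u n) (u m)) hε
    linarith [hu n]

lemma cauchySeq_of_chain (hε : 0 < ε) (hF : BddBelow (range F))
    (hu : ∀ n, F (u (n + 1)) + ε * dist (u (n + 1)) (u n) ≤ F (u n)) : CauchySeq u := by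
  have hbdd : BddBelow (range fun n => F (u n)) := hF.mono (range_comp_subset_range u F)
  have hanti : Antitone fun n => F (u n) := antitone_nat_of_succ_le fun n => by
    have := mul_nonneg hε.le (dist_nonneg (x := u (n + 1)) (y := u n))
    linarith [hu n]
  have hlim := tendsto_atTop_ciInf hanti hbdd
  refine Metric.cauchySeq_iff'.2 fun r hr => ?_
  obtain ⟨N, hN⟩ := (hlim.eventually (gt_mem_nhds (lt_add_of_pos_right _ (mul_pos hε hr)))).exists
  refine ⟨N, fun n hn => lt_of_mul_lt_mul_left ?_ hε.le⟩
  linarith [add_dist_le_of_chain hε.le hu hn, ciInf_le hbdd n]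

lemma add_dist_le_of_tendsto_chain (hε : 0 ≤ ε) (hF : LowerSemicontinuous F)
    (hu : ∀ n, F (u (n + 1)) + ε * dist (u (n + 1)) (u n) ≤ F (u n)) {x : α}
    (hx : Tendsto u atTop (𝓝 x)) (m : ℕ) : F x + ε * dist x (u m) ≤ F (u m) := by
  have hclosed : IsClosed {z | F z + ε * dist z (u m) ≤ F (u m)} :=
    (hF.add (continuous_const.mul (continuous_id.dist continuous_const)).lowerSemicontinuous)
      |>.isClosed_preimage _
  exact hclosed.mem_of_tendsto hx
    (eventually_atTop.2 ⟨m, fun n hn => add_dist_le_of_chain hε hu hn⟩)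

/-- Ekeland's variational principle. -/
theorem exists_add_dist_le_forall_le_add_dist [CompleteSpace α] (hF : LowerSemicontinuous F)
    (hbdd : BddBelow (range F)) (hε : 0 < ε) (x₀ : α) :
    ∃ x, F x + ε * dist x x₀ ≤ F x₀ ∧ ∀ z, F x ≤ F z + ε * dist z x := by
  choose step hstep hstep_min using fun (n : ℕ) z =>
    exists_almost_min_of_add_dist_le (ε := ε) hbdd z (Nat.one_div_pos_of_nat (n := n))
  let u : ℕ → α := fun n => Nat.rec x₀ step n
  have hu : ∀ n, F (u (n + 1)) + ε * dist (u (n + 1)) (u n) ≤ F (u n) := fun n => hstep n (u n)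
  obtain ⟨x, hx⟩ := cauchySeq_tendsto_of_complete (cauchySeq_of_chain hε hbdd hu)
  have hxu := add_dist_le_of_tendsto_chain hε.le hF hu hx
  refine ⟨x, hxu 0, fun z => ?_⟩
  by_contra! hz
  -- `z` would lie below every `u n`, so `F (u (n + 1)) ≤ F z + 1 / (n + 1)` for all `n`.
  have hzu : ∀ n, F z + ε * dist z (u n) ≤ F (u n) := fun n => by
    linarith [hxu n, mul_le_mul_of_nonneg_left (dist_triangle z x (u n)) hε.le]
  have hxz : F x ≤ F z := by
    have hlim : Tendsto (fun n : ℕ => F z + 1 / ((n : ℝ) + 1)) atTop (𝓝 (F z)) := by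
      simpa using tendsto_const_nhds.add (tendsto_one_div_add_atTop_nhds_zero_nat (𝕜 := ℝ))
    refine ge_of_tendsto hlim (Eventually.of_forall fun n => ?_)
    have := mul_nonneg hε.le (dist_nonneg (x := x) (y := u (n + 1)))
    linarith [hxu (n + 1), hstep_min n (u n) z (hzu n)]
  linarith [mul_nonneg hε.le (dist_nonneg (x := z) (y := x))]

end Ekeland

section Gateaux

variable {X Y : Type*} [NormedAddCommGroup X] [NormedSpace ℝ X]
  [NormedAddCommGroup Y] [NormedSpace ℝ Y] {f : X → Y} {T : X →L[ℝ] Y} {x : X}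

lemma HasGateauxDerivAt.eventually_dist_add_smul_le (hf : HasGateauxDerivAt f T x) {v : X}
    {y : Y} (hv : T v = y - f x) {θ : ℝ} (hθ : 0 < θ) :
    ∀ᶠ t in 𝓝[>] (0 : ℝ), dist (f (x + t • v)) y ≤ (1 - t) * dist (f x) y + t * θ := by
  set w : ℝ → Y := fun t => t⁻¹ • (f (x + t • v) - f x) - (y - f x)
  have hw : Tendsto w (𝓝[>] 0) (𝓝 0) := by
    have := ((hf v).mono_left (nhdsWithin_mono _ fun t (ht : 0 < t) => ht.ne')).sub_const (y - f x)
    rwa [hv, sub_self] at this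
  filter_upwards [hw.norm.eventually (gt_mem_nhds (by rwa [norm_zero])),
    Ioo_mem_nhdsGT one_pos] with t hwt ⟨ht0, ht1⟩
  have hsplit : f (x + t • v) - y = (1 - t) • (f x - y) + t • w t := by
    simp only [w]
    rw [smul_sub t, smul_smul, mul_inv_cancel₀ ht0.ne', one_smul]
    module
  rw [dist_eq_norm, dist_eq_norm, hsplit]
  calc ‖(1 - t) • (f x - y) + t • w t‖ ≤ ‖(1 - t) • (f x - y)‖ + ‖t • w t‖ := norm_add_le _ _
    _ ≤ (1 - t) * ‖f x - y‖ + t * θ := by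
      rw [norm_smul, norm_smul, Real.norm_of_nonneg (by linarith), Real.norm_of_nonneg ht0.le]
      gcongr

theorem HasGateauxDerivAt.eq_of_eventually_dist_le_add_dist (hf : HasGateauxDerivAt f T x)
    {S : Y →L[ℝ] X} (hTS : T.comp S = ContinuousLinearMap.id ℝ Y) {ε : ℝ} (hε : 0 ≤ ε)
    (hεS : ε * ‖S‖ < 1) {y : Y} (hloc : ∀ᶠ z in 𝓝 x, dist (f x) y ≤ dist (f z) y + ε * dist z x) :
    f x = y := by
  by_contra hne
  set b := dist (f x) y
  have hb : 0 < b := dist_pos.2 hne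
  set v := S (y - f x)
  have hv : T v = y - f x := DFunLike.congr_fun hTS (y - f x)
  have hvb : ‖v‖ ≤ ‖S‖ * b := calc
    ‖v‖ ≤ ‖S‖ * ‖y - f x‖ := S.le_opNorm _
    _ = ‖S‖ * b := by rw [← dist_eq_norm, dist_comm]
  have hθ : 0 < b * (1 - ε * ‖S‖) / 2 := by have := sub_pos.2 hεS; positivity
  have hpath : Tendsto (fun t : ℝ => x + t • v) (𝓝[>] 0) (𝓝 x) :=
    ((continuous_const.add (continuous_id.smul continuous_const)).tendsto' 0 x (by simp)).mono_left
      nhdsWithin_le_nhds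
  obtain ⟨t, hdesc, hmin, ht⟩ := ((hf.eventually_dist_add_smul_le hv hθ).and
    ((hpath.eventually hloc).and self_mem_nhdsWithin)).exists
  rw [dist_self_add_left, norm_smul, Real.norm_of_nonneg (le_of_lt ht)] at hmin
  have hstep : ε * (t * ‖v‖) ≤ ε * (t * (‖S‖ * b)) := by gcongr
  nlinarith [mul_pos (mul_pos (show 0 < t from ht) hb) (sub_pos.2 hεS)]

end Gateaux

section OpenMapping

variable {X Y : Type*} [NormedAddCommGroup X] [NormedSpace ℝ X] [CompleteSpace X]
  [NormedAddCommGroup Y] [NormedSpace ℝ Y] {U : Set X} {f : X → Y} {f' : X → X →L[ℝ] Y}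
  {R : X → Y →L[ℝ] X} {κ : ℝ}

theorem ball_subset_image_ball_of_rightInverse (hf : ContinuousOn f U)
    (hf' : ∀ x ∈ U, HasGateauxDerivAt f (f' x) x)
    (hR : ∀ x ∈ U, (f' x).comp (R x) = ContinuousLinearMap.id ℝ Y) (hκ : ∀ x ∈ U, ‖R x‖ ≤ κ)
    (hκpos : 0 < κ) {x₀ : X} {δ : ℝ} (hsub : ball x₀ δ ⊆ U) :
    ball (f x₀) (δ / κ) ⊆ f '' ball x₀ δ := by
  intro y hy
  rw [mem_ball, dist_comm] at hy
  set a := dist (f x₀) y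
  have hδ : 0 < δ := (div_pos_iff_of_pos_right hκpos).1 (dist_nonneg.trans_lt hy)
  have had : a / δ < 1 / κ := by
    rwa [div_lt_div_iff₀ hδ hκpos, one_mul, ← lt_div_iff₀ hκpos]
  -- `ε < 1 / κ` makes `ε * κ < 1`; `a / ε < δ'` keeps the Ekeland point inside `ball x₀ δ'`.
  obtain ⟨ε, haε, hεκ⟩ := exists_between had
  have hε : 0 < ε := (div_nonneg dist_nonneg hδ.le).trans_lt haε
  have haεδ : a / ε < δ := by
    rw [div_lt_iff₀ hε, mul_comm]; rwa [div_lt_iff₀ hδ] at haε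
  obtain ⟨δ', haδ', hδ'δ⟩ := exists_between haεδ
  have hδ' : 0 < δ' := (div_nonneg dist_nonneg hε.le).trans_lt haδ'
  set K := closedBall x₀ δ'
  have hKU : K ⊆ U := (closedBall_subset_ball hδ'δ).trans hsub
  have : CompleteSpace K := isClosed_closedBall.completeSpace_coe
  have hFcont : Continuous fun z : K => dist (f z) y :=
    (hf.mono hKU).domRestrict.dist continuous_const
  obtain ⟨xb, hxb₀, hxb⟩ := exists_add_dist_le_forall_le_add_dist hFcont.lowerSemicontinuous
    ⟨0, by rintro _ ⟨z, rfl⟩; exact dist_nonneg⟩ hε ⟨x₀, mem_closedBall_self hδ'.le⟩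
  change dist (f xb) y + ε * dist (xb : X) x₀ ≤ a at hxb₀
  have hxb_ball : dist (xb : X) x₀ < δ' := by
    refine lt_of_le_of_lt ((le_div_iff₀' hε).2 ?_) haδ'
    linarith [dist_nonneg (x := f xb) (y := y)]
  have hεR : ε * ‖R xb‖ < 1 := calc
    ε * ‖R xb‖ ≤ ε * κ := mul_le_mul_of_nonneg_left (hκ _ (hKU xb.2)) hε.le
    _ < 1 := by rwa [lt_div_iff₀ hκpos] at hεκ
  refine ⟨xb, ball_subset_ball hδ'δ.le hxb_ball, ?_⟩
  refine (hf' xb (hKU xb.2)).eq_of_eventually_dist_le_add_dist (hR xb (hKU xb.2)) hε.le hεR ?_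
  filter_upwards [isOpen_ball.mem_nhds hxb_ball] with z hz
  exact hxb ⟨z, ball_subset_closedBall hz⟩

theorem isOpen_image_of_rightInverse (hf : ContinuousOn f U)
    (hf' : ∀ x ∈ U, HasGateauxDerivAt f (f' x) x)
    (hR : ∀ x ∈ U, (f' x).comp (R x) = ContinuousLinearMap.id ℝ Y) (hκ : ∀ x ∈ U, ‖R x‖ ≤ κ)
    {W : Set X} (hWU : W ⊆ U) (hW : IsOpen W) : IsOpen (f '' W) := by
  have hκ₁ : ∀ x ∈ U, ‖R x‖ ≤ max κ 1 := fun x hx => (hκ x hx).trans (le_max_left _ _)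
  refine Metric.isOpen_iff.2 ?_
  rintro _ ⟨z, hz, rfl⟩
  obtain ⟨δ, hδ, hball⟩ := Metric.isOpen_iff.1 hW z hz
  exact ⟨δ / max κ 1, by positivity, (ball_subset_image_ball_of_rightInverse hf hf' hR hκ₁
    (by positivity) (hball.trans hWU)).trans (image_mono hball)⟩

end OpenMapping

theorem ekeland_open_mapping_general
    {X Y : Type*} [NormedAddCommGroup X] [NormedSpace ℝ X] [CompleteSpace X]
    [NormedAddCommGroup Y] [NormedSpace ℝ Y]
    {U : Set X} (hUopen : IsOpen U)
    {f : X → Y} (hf : ContinuousOn f U)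
    {f' : X → X →L[ℝ] Y} (hf' : ∀ x ∈ U, HasGateauxDerivAt f (f' x) x)
    {R : X → Y →L[ℝ] X}
    (hR : ∀ x ∈ U, (f' x).comp (R x) = ContinuousLinearMap.id ℝ Y)
    {κ : ℝ} (hκ : ∀ x ∈ U, ‖R x‖ ≤ κ) :
    (∀ (x₀ : X) (δ : ℝ), 0 < δ → Metric.ball x₀ δ ⊆ U →
        Metric.ball (f x₀) (δ / κ) ⊆ f '' Metric.ball x₀ δ) ∧
      IsOpen (f '' U) ∧
      ∀ W : Set X, W ⊆ U → IsOpen W → IsOpen (f '' W) := by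
  refine ⟨fun x₀ δ hδ hsub => ?_, isOpen_image_of_rightInverse hf hf' hR hκ subset_rfl hUopen,
    fun W hWU hW => isOpen_image_of_rightInverse hf hf' hR hκ hWU hW⟩
  obtain rfl | hκpos := (norm_nonneg _ |>.trans (hκ x₀ (hsub (mem_ball_self hδ)))).eq_or_lt
  · simp
  · exact ball_subset_image_ball_of_rightInverse hf hf' hR hκ hκpos hsub

/-- Ekeland's open mapping theorem: if `f` is continuous and Gâteaux differentiable
on the open set `U`, each derivative `f'(x)` has a right inverse `R x`, and
`κ` is a uniform bound for `‖R x‖`, then `B(f x₀, δ/κ) ⊆ f (B(x₀, δ))` for every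
ball `B(x₀, δ) ⊆ U`; in particular `f(U)` is open and `f` is an open map. -/
theorem ekeland_open_mapping
    {X Y : Type*} [NormedAddCommGroup X] [NormedSpace ℝ X] [CompleteSpace X]
    [NormedAddCommGroup Y] [NormedSpace ℝ Y] [CompleteSpace Y]
    {U : Set X} (hUopen : IsOpen U)
    {f : X → Y} (hf : ContinuousOn f U)
    {f' : X → X →L[ℝ] Y} (hf' : ∀ x ∈ U, HasGateauxDerivAt f (f' x) x)
    {R : X → Y →L[ℝ] X}
    (hR : ∀ x ∈ U, (f' x).comp (R x) = ContinuousLinearMap.id ℝ Y)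
    {κ : ℝ} (hκ : ∀ x ∈ U, ‖R x‖ ≤ κ) :
    (∀ (x₀ : X) (δ : ℝ), 0 < δ → Metric.ball x₀ δ ⊆ U →
        Metric.ball (f x₀) (δ / κ) ⊆ f '' Metric.ball x₀ δ) ∧
      IsOpen (f '' U) ∧
      ∀ W : Set X, W ⊆ U → IsOpen W → IsOpen (f '' W) :=
  ekeland_open_mapping_general hUopen hf hf' hR hκ
end
end

section
/- Let X, Y be real Banach spaces, U ⊆ X an open convex set, f : U → Y continuous, and Jf a pseudo-Jacobian mapping for f on U satisfying the chain rule condition. Suppose that every operator in the convex hull co Jf(U) (where Jf(U) = ⋃_{x ∈ U} Jf(x)) is an isomorphism from X onto Y, and that α := inf{//T// : T ∈ co Jf(U)} > 0, where //T// denotes the co-norm of T. Then V := f(U) is open in Y, f is a homeomorphism from U onto V, and the inverse map f⁻¹ is (1/α)-Lipschitz on V. -/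
open Filter Topology Metric Set Bornology

noncomputable section

/-- The co-norm of a bounded linear operator: `//T// = inf {‖T x‖ : ‖x‖ = 1}`. -/
def conorm {X Y : Type*} [NormedAddCommGroup X] [NormedSpace ℝ X]
    [NormedAddCommGroup Y] [NormedSpace ℝ Y] (T : X →L[ℝ] Y) : ℝ :=
  sInf {c : ℝ | ∃ x : X, ‖x‖ = 1 ∧ c = ‖T x‖}

/-- `T` is an isomorphism of Banach spaces. -/
def IsBanachIso {X Y : Type*} [NormedAddCommGroup X] [NormedSpace ℝ X]
    [NormedAddCommGroup Y] [NormedSpace ℝ Y] (T : X →L[ℝ] Y) : Prop :=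
  ∃ e : X ≃L[ℝ] Y, (e : X →L[ℝ] Y) = T

/-!
The estimate `α ‖u - v‖ ≤ ‖f u - f v‖` is a mean value inequality along the segment `[v, u]`: the
vectors `T (u - v)`, `T ∈ co Jf(U)`, form a convex set at distance at least `α ‖u - v‖` from the
origin, so for every `γ < α ‖u - v‖` Hahn–Banach gives a functional `p` of norm at most one that
is `≥ γ` on this set, and the pseudo-Jacobian bounds the Dini derivative of `-p ∘ f` along the
segment by `-γ`. This gives injectivity and the Lipschitz bound for the inverse.

For openness, given `y` close to `f x₀`, Ekeland's variational principle on a closed ball around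
`x₀` gives an interior point `x` at which all Dini derivatives of `‖f · - y‖` in directions `v`
are at least `-(α / 2) ‖v‖`. If `f x ≠ y`, the chain rule condition transfers this bound to the
support function of the weak-star closed convex set `A_{x,y}(f)`, which by weak-star separation
must then meet the ball of radius `α / 2`. But every element `p ∘ T` of `A_{x,y}(f)` has norm at
least `α`, because `p` norms `f x - y` and `T` is onto with co-norm at least `α`.
-/

lemma le_limsup_of_nonpos_of_eventually_le {ι : Type*} {l : Filter ι} [l.NeBot] {u : ι → ℝ}
    {c : ℝ} (hc : c ≤ 0) (h : ∀ᶠ i in l, c ≤ u i) : c ≤ limsup u l := by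
  by_cases hb : l.IsBoundedUnder (· ≤ ·) u
  · exact le_limsup_of_frequently_le h.frequently hb
  · rwa [Real.limsup_of_not_isBoundedUnder hb]

/-- `c < 0` is needed: a difference quotient unbounded above has junk `limsup` `0`. -/
lemma le_add_mul_of_diniUpper_le {g : ℝ → ℝ} {a b c : ℝ} (hab : a ≤ b) (hc : c < 0)
    (hg : ContinuousOn g (Icc a b)) (hd : ∀ s ∈ Ico a b, diniUpper g s 1 ≤ c) :
    g b ≤ g a + c * (b - a) := by
  refine image_le_of_liminf_slope_right_le_deriv_boundary hg (B := fun x => g a + c * (x - a))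
    (B' := fun _ => c) (by simp) (by fun_prop) (fun x _ => ?_) (fun s hs r hr => ?_) ⟨hab, le_rfl⟩
  · simpa using (((hasDerivWithinAt_id x (Ici x)).sub_const a).const_mul c).const_add (g a)
  have hbdd : (𝓝[>] (0 : ℝ)).IsBoundedUnder (· ≤ ·) fun t => (g (s + t • 1) - g s) / t := by
    by_contra hb
    have := hd s hs
    rw [diniUpper, Real.limsup_of_not_isBoundedUnder hb] at this
    linarith
  have hev := eventually_lt_of_limsup_lt ((hd s hs).trans_lt hr) hbdd
  have hshift : Tendsto (s + ·) (𝓝[>] 0) (𝓝[>] s) := tendsto_nhdsWithin_iff.2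
    ⟨by simpa using ((continuous_const_add s).tendsto 0).mono_left nhdsWithin_le_nhds,
      by filter_upwards [self_mem_nhdsWithin] with t ht using lt_add_of_pos_right s ht⟩
  refine hshift.frequently (hev.mono fun t ht => ?_).frequently
  simpa [slope_def_field] using ht

section Ekeland

variable {M : Type*} [PseudoMetricSpace M]

def ekelandSet (g : M → ℝ) (δ : ℝ) (a : M) : Set M :=
  {z | g z + δ * dist z a ≤ g a}

lemma mem_ekelandSet {g : M → ℝ} {δ : ℝ} {a z : M} :
    z ∈ ekelandSet g δ a ↔ g z + δ * dist z a ≤ g a :=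
  Iff.rfl

lemma mem_ekelandSet_self (g : M → ℝ) (δ : ℝ) (a : M) : a ∈ ekelandSet g δ a := by
  simp [mem_ekelandSet]

lemma ekelandSet_trans {g : M → ℝ} {δ : ℝ} (hδ : 0 ≤ δ) {a b z : M} (hb : b ∈ ekelandSet g δ a)
    (hz : z ∈ ekelandSet g δ b) : z ∈ ekelandSet g δ a := by
  rw [mem_ekelandSet] at *
  nlinarith [dist_triangle z b a]

lemma isClosed_ekelandSet {g : M → ℝ} (hg : Continuous g) (δ : ℝ) (a : M) :
    IsClosed (ekelandSet g δ a) :=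
  isClosed_le (by fun_prop) continuous_const

lemma cauchySeq_of_mem_ekelandSet {g : M → ℝ} (hbdd : BddBelow (range g)) {δ : ℝ} (hδ : 0 < δ)
    {x : ℕ → M} (hx : ∀ n m, n ≤ m → x m ∈ ekelandSet g δ (x n)) : CauchySeq x := by
  have hdist (n m : ℕ) (hnm : n ≤ m) : δ * dist (x m) (x n) ≤ g (x n) - g (x m) := by
    linarith [mem_ekelandSet.1 (hx n m hnm)]
  have hanti : Antitone (g ∘ x) := fun n m hnm => by
    have := mul_nonneg hδ.le (dist_nonneg (x := x m) (y := x n))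
    simp only [Function.comp_apply]
    linarith [hdist n m hnm]
  have hgbdd : BddBelow (range (g ∘ x)) := hbdd.mono (range_comp_subset_range x g)
  refine Metric.cauchySeq_iff'.2 fun ε hε => ?_
  obtain ⟨N, hN⟩ := eventually_atTop.1 (tendsto_atTop_ciInf hanti hgbdd
    (Iio_mem_nhds (lt_add_of_pos_right (⨅ n, (g ∘ x) n) (mul_pos hδ hε))))
  refine ⟨N, fun n hn => lt_of_mul_lt_mul_left ?_ hδ.le⟩
  have hinf : (⨅ n, (g ∘ x) n) ≤ g (x n) := ciInf_le hgbdd n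
  have hN' : g (x N) < (⨅ n, (g ∘ x) n) + δ * ε := hN N le_rfl
  linarith [hdist N n hn]

theorem exists_ekeland [CompleteSpace M] {g : M → ℝ} (hg : Continuous g)
    (hbdd : BddBelow (range g)) {δ : ℝ} (hδ : 0 < δ) (x₀ : M) :
    ∃ x, g x + δ * dist x x₀ ≤ g x₀ ∧ ∀ z, g x ≤ g z + δ * dist z x := by
  have hbdd' (a : M) : BddBelow (g '' ekelandSet g δ a) := hbdd.mono (image_subset_range _ _)
  have hstep (n : ℕ) (a : M) :
      ∃ b ∈ ekelandSet g δ a, g b ≤ sInf (g '' ekelandSet g δ a) + (1 / 2) ^ n := by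
    obtain ⟨_, ⟨b, hb, rfl⟩, hlt⟩ := Real.lt_sInf_add_pos
      ((nonempty_of_mem (mem_ekelandSet_self g δ a)).image g)
      (by positivity : (0 : ℝ) < (1 / 2) ^ n)
    exact ⟨b, hb, hlt.le⟩
  choose next hnext_mem hnext_le using hstep
  let x : ℕ → M := fun n => Nat.rec x₀ next n
  have hchain (n m : ℕ) (hnm : n ≤ m) : x m ∈ ekelandSet g δ (x n) := by
    induction m, hnm using Nat.le_induction with
    | base => exact mem_ekelandSet_self g δ (x n)
    | succ m _ ih => exact ekelandSet_trans hδ.le ih (hnext_mem m (x m))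
  have hcauchy := cauchySeq_of_mem_ekelandSet hbdd hδ hchain
  obtain ⟨xh, hxh⟩ := cauchySeq_tendsto_of_complete hcauchy
  have hxh_mem (n : ℕ) : xh ∈ ekelandSet g δ (x n) :=
    (isClosed_ekelandSet hg δ (x n)).mem_of_tendsto hxh
      (eventually_atTop.2 ⟨n, fun m hm => hchain n m hm⟩)
  refine ⟨xh, hxh_mem 0, fun z => ?_⟩
  by_contra! hz
  -- `z` would lie in every Ekeland set of the sequence, forcing `g xh ≤ g z`
  have hz_mem (n : ℕ) : z ∈ ekelandSet g δ (x n) := ekelandSet_trans hδ.le (hxh_mem n) hz.le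
  have hle (n : ℕ) : g (x (n + 1)) ≤ g z + (1 / 2) ^ n :=
    (hnext_le n (x n)).trans (add_le_add_left (csInf_le (hbdd' _) ⟨z, hz_mem n, rfl⟩) _)
  have hgxh : g xh ≤ g z + 0 := le_of_tendsto_of_tendsto'
    ((hg.tendsto xh).comp (hxh.comp (tendsto_add_atTop_nat 1)))
    (tendsto_const_nhds.add (tendsto_pow_atTop_nhds_zero_of_lt_one (by norm_num) (by norm_num)))
    hle
  nlinarith [dist_nonneg (x := z) (y := xh)]

end Ekeland

section

variable {X Y : Type*} [NormedAddCommGroup X] [NormedSpace ℝ X] [NormedAddCommGroup Y]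
  [NormedSpace ℝ Y]

lemma diniUpper_comp_add_smul (φ : X → ℝ) (x w : X) (s : ℝ) :
    diniUpper (fun r : ℝ => φ (x + r • w)) s 1 = diniUpper φ (x + s • w) w := by
  simp only [diniUpper, smul_eq_mul, mul_one, add_smul, add_assoc]

lemma neg_mul_norm_le_diniUpper {φ : X → ℝ} {x : X} {δ : ℝ} (hδ : 0 ≤ δ)
    (h : ∀ᶠ z in 𝓝 x, φ x ≤ φ z + δ * ‖z - x‖) (v : X) : -(δ * ‖v‖) ≤ diniUpper φ x v := by
  have hline : Tendsto (fun t : ℝ => x + t • v) (𝓝[>] 0) (𝓝 x) := by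
    have : Continuous fun t : ℝ => x + t • v := by fun_prop
    simpa using this.tendsto' 0 x (by simp) |>.mono_left nhdsWithin_le_nhds
  refine le_limsup_of_nonpos_of_eventually_le (by have := norm_nonneg v; nlinarith) ?_
  filter_upwards [hline.eventually h, self_mem_nhdsWithin] with t ht (htpos : 0 < t)
  rw [add_sub_cancel_left, norm_smul, Real.norm_of_nonneg htpos.le] at ht
  rw [le_div_iff₀ htpos]
  nlinarith

lemma le_apply_sub_of_isPseudoJacobianAt {U : Set X} (hU : Convex ℝ U) {f : X → Y}
    (hf : ContinuousOn f U) {Jf : X → Set (X →L[ℝ] Y)}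
    (hJf : ∀ x ∈ U, IsPseudoJacobianAt f (Jf x) x) {u v : X} (hu : u ∈ U) (hv : v ∈ U)
    {p : Y →L[ℝ] ℝ} {γ : ℝ} (hγ : 0 < γ) (hp : ∀ x ∈ U, ∀ T ∈ Jf x, γ ≤ p (T (u - v))) :
    γ ≤ p (f u - f v) := by
  have hseg : ∀ s ∈ Icc (0 : ℝ) 1, v + s • (u - v) ∈ U := fun s hs => hU.add_smul_sub_mem hv hu hs
  have hg : ContinuousOn (fun s : ℝ => (-p) (f (v + s • (u - v)))) (Icc 0 1) :=
    (-p).continuous.comp_continuousOn (hf.comp (by fun_prop) hseg)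
  have hd : ∀ s ∈ Ico (0 : ℝ) 1, diniUpper (fun s : ℝ => (-p) (f (v + s • (u - v)))) s 1 ≤ -γ := by
    intro s hs
    have hx := hseg s (Ico_subset_Icc_self hs)
    rw [diniUpper_comp_add_smul (fun z => (-p) (f z))]
    refine ((hJf _ hx).2 (-p) (u - v)).trans (csSup_le ((hJf _ hx).1.image _) ?_)
    rintro _ ⟨T, hT, rfl⟩
    simp only [neg_apply, neg_le_neg_iff]
    exact hp _ hx T hT
  have := le_add_mul_of_diniUpper_le zero_le_one (neg_lt_zero.2 hγ) hg hd
  simp only [one_smul, zero_smul, add_zero, add_sub_cancel, neg_apply] at this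
  rw [map_sub]
  linarith

lemma mul_norm_le_norm_apply_of_le_conorm {T : X →L[ℝ] Y} {a : ℝ} (h : a ≤ conorm T) (x : X) :
    a * ‖x‖ ≤ ‖T x‖ := by
  rcases eq_or_ne x 0 with rfl | hx
  · simp
  have hx' : 0 < ‖x‖ := norm_pos_iff.2 hx
  have hunit : ‖‖x‖⁻¹ • x‖ = 1 := by rw [norm_smul, norm_inv, norm_norm, inv_mul_cancel₀ hx'.ne']
  have hbdd : BddBelow {c : ℝ | ∃ z : X, ‖z‖ = 1 ∧ c = ‖T z‖} :=
    ⟨0, by rintro _ ⟨z, -, rfl⟩; exact norm_nonneg _⟩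
  have : a ≤ ‖x‖⁻¹ * ‖T x‖ := by
    refine h.trans (csInf_le hbdd ⟨_, hunit, ?_⟩)
    rw [map_smul, norm_smul, norm_inv, norm_norm]
  rwa [le_inv_mul_iff₀ hx', mul_comm] at this

lemma exists_norm_le_one_forall_le_apply {K : Set Y} (hK : Convex ℝ K) {β γ : ℝ}
    (hKβ : ∀ k ∈ K, β ≤ ‖k‖) (hγβ : γ < β) :
    ∃ p : StrongDual ℝ Y, ‖p‖ ≤ 1 ∧ ∀ k ∈ K, γ ≤ p k := by
  rcases le_or_gt γ 0 with hγ | hγ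
  · exact ⟨0, by simp, fun k _ => by simpa using hγ⟩
  have hdisj : Disjoint (ball (0 : Y) β) K := disjoint_left.2 fun k hk hkK => by
    have := hKβ k hkK
    rw [mem_ball_zero_iff] at hk
    linarith
  obtain ⟨q, s, hq, hqK⟩ := geometric_hahn_banach_open (convex_ball 0 β) isOpen_ball hK hdisj
  have hs : 0 < s := by simpa using hq 0 (mem_ball_self (hγ.trans hγβ))
  have hqnorm : ‖q‖ ≤ s / γ := by
    refine ContinuousLinearMap.opNorm_le_of_unit_norm (by positivity) fun x hx => ?_
    have hmem : ∀ c : ℝ, |c| = γ → c • x ∈ ball (0 : Y) β := fun c hc => by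
      rwa [mem_ball_zero_iff, norm_smul, hx, mul_one, Real.norm_eq_abs, hc]
    have h₁ := hq _ (hmem γ (abs_of_pos hγ))
    have h₂ := hq _ (hmem (-γ) (by rw [abs_neg, abs_of_pos hγ]))
    rw [map_smul, smul_eq_mul] at h₁ h₂
    rw [Real.norm_eq_abs, abs_le, ← neg_div, le_div_iff₀ hγ, div_le_iff₀ hγ]
    constructor <;> linarith
  refine ⟨(γ / s) • q, ?_, fun k hk => ?_⟩
  · rw [norm_smul, Real.norm_of_nonneg (by positivity)]
    calc γ / s * ‖q‖ ≤ γ / s * (s / γ) := by gcongr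
      _ = 1 := by field_simp
  · rw [smul_apply, smul_eq_mul]
    calc γ = γ / s * s := by field_simp
      _ ≤ γ / s * q k := by gcongr; exact hqK k hk

lemma mul_norm_sub_le_norm_sub_of_le_conorm {U : Set X} (hU : Convex ℝ U)
    {f : X → Y} (hf : ContinuousOn f U) {Jf : X → Set (X →L[ℝ] Y)}
    (hJf : ∀ x ∈ U, IsPseudoJacobianAt f (Jf x) x) {α : ℝ}
    (hα : ∀ T ∈ convexHull ℝ (⋃ x ∈ U, Jf x), α ≤ conorm T) {u v : X} (hu : u ∈ U)
    (hv : v ∈ U) : α * ‖u - v‖ ≤ ‖f u - f v‖ := by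
  refine le_of_forall_lt_imp_le_of_dense fun γ hγ => ?_
  rcases le_or_gt γ 0 with hγ₀ | hγ₀
  · exact hγ₀.trans (norm_nonneg _)
  let ev := ContinuousLinearMap.apply ℝ Y (u - v)
  obtain ⟨p, hp, hpK⟩ := exists_norm_le_one_forall_le_apply
    ((convex_convexHull ℝ _).linear_image ev.toLinearMap)
    (fun _ ⟨T, hT, hk⟩ => hk ▸ mul_norm_le_norm_apply_of_le_conorm (hα T hT) (u - v)) hγ
  calc γ ≤ p (f u - f v) :=
        le_apply_sub_of_isPseudoJacobianAt hU hf hJf hu hv hγ₀ fun x hx T hT =>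
          hpK _ ⟨T, subset_convexHull ℝ _ (mem_iUnion₂.2 ⟨x, hx, hT⟩), rfl⟩
    _ ≤ ‖p‖ * ‖f u - f v‖ := (le_abs_self _).trans (p.le_opNorm _)
    _ ≤ ‖f u - f v‖ := mul_le_of_le_one_left (norm_nonneg _) hp


lemma clarkeDirDeriv_norm_neg_self_le (w : Y) :
    clarkeDirDeriv (fun y : Y => ‖y‖) w (-w) ≤ -‖w‖ := by
  have hpos : ∀ᶠ q : Y × ℝ in 𝓝 w ×ˢ 𝓝[>] 0, q.2 ∈ Ioo 0 1 :=
    Eventually.prod_inr (Ioo_mem_nhdsGT one_pos) _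
  have hlow : ∀ᶠ q : Y × ℝ in 𝓝 w ×ˢ 𝓝[>] 0, -‖w‖ ≤ (‖q.1 + q.2 • -w‖ - ‖q.1‖) / q.2 := by
    filter_upwards [hpos] with ⟨z, t⟩ ⟨ht, _⟩
    rw [le_div_iff₀ ht]
    have := norm_sub_norm_le z (z + t • -w)
    rw [sub_add_cancel_left, norm_neg, norm_smul, norm_neg, Real.norm_of_nonneg ht.le] at this
    linarith
  refine le_of_forall_pos_le_add fun ε hε => limsup_le_of_le
    (isBoundedUnder_of_eventually_ge hlow).isCoboundedUnder_le ?_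
  filter_upwards [hpos, Eventually.prod_inl (ball_mem_nhds w (half_pos hε)) _]
    with ⟨z, t⟩ ⟨ht, ht₁⟩ (hz : dist z w < ε / 2)
  have hconv : ‖z + t • -w‖ ≤ (1 - t) * ‖z‖ + t * ‖z - w‖ := by
    calc ‖z + t • -w‖ = ‖(1 - t) • z + t • (z - w)‖ := by congr 1; module
      _ ≤ (1 - t) * ‖z‖ + t * ‖z - w‖ := by
        refine (norm_add_le _ _).trans_eq ?_
        rw [norm_smul, norm_smul, Real.norm_of_nonneg (by linarith), Real.norm_of_nonneg ht.le]
  have hzw : ‖w‖ - ‖z‖ ≤ ‖z - w‖ := by simpa [norm_sub_rev] using norm_sub_norm_le w z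
  rw [dist_eq_norm] at hz
  rw [div_le_iff₀ ht]
  nlinarith

lemma norm_le_apply_of_mem_clarkeSubdiff_norm {w : Y} {p : StrongDual ℝ Y}
    (hp : p ∈ clarkeSubdiff (fun y : Y => ‖y‖) w) : ‖w‖ ≤ p w := by
  have := (hp (-w)).trans (clarkeDirDeriv_norm_neg_self_le w)
  rw [map_neg] at this
  linarith

lemma le_norm_comp_of_norm_le_apply {T : X →L[ℝ] Y} {α : ℝ}
    (hT : ∀ x, α * ‖x‖ ≤ ‖T x‖) {p : StrongDual ℝ Y} {x : X} (hx : T x ≠ 0)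
    (hp : ‖T x‖ ≤ p (T x)) : α ≤ ‖p.comp T‖ := by
  have hx₀ : 0 < ‖x‖ := norm_pos_iff.2 fun h => hx (by rw [h, map_zero])
  refine le_of_mul_le_mul_right ?_ hx₀
  calc α * ‖x‖ ≤ p (T x) := (hT x).trans hp
    _ ≤ ‖p.comp T‖ * ‖x‖ := (le_abs_self _).trans ((p.comp T).le_opNorm x)

lemma exists_mem_norm_le_of_forall_neg_mul_norm_le_sSup {A : Set (StrongDual ℝ X)}
    (hne : A.Nonempty) (hconv : Convex ℝ A) (hclosed : IsClosed (StrongDual.toWeakDual '' A))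
    {r : ℝ} (hr : 0 ≤ r)
    (hsup : ∀ v : X, -(r * ‖v‖) ≤ sSup ((fun S : StrongDual ℝ X => S v) '' A)) :
    ∃ S ∈ A, ‖S‖ ≤ r := by
  by_contra! hA
  let B : Set (WeakDual ℝ X) := WeakDual.toStrongDual ⁻¹' closedBall 0 r
  have hdisj : Disjoint B (StrongDual.toWeakDual '' A) := by
    rintro _ hB hA' _ hS
    obtain ⟨S, hSA, rfl⟩ := hA' hS
    have : ‖S‖ ≤ r := mem_closedBall_zero_iff.1 (hB hS)
    exact absurd (hA S hSA) this.not_gt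
  have : LocallyConvexSpace ℝ (WeakDual ℝ X) := WeakBilin.locallyConvexSpace
  have hBconv : Convex ℝ B :=
    (convex_closedBall (0 : StrongDual ℝ X) r).linear_preimage WeakDual.toStrongDual.toLinearMap
  have hAconv : Convex ℝ (StrongDual.toWeakDual '' A) :=
    hconv.linear_image StrongDual.toWeakDual.toLinearMap
  obtain ⟨φ, u, c, hφB, huc, hφA⟩ := geometric_hahn_banach_compact_closed
    hBconv (WeakDual.isCompact_closedBall 0 r) hAconv hclosed hdisj
  -- weak-star continuous functionals are evaluations
  obtain ⟨v, rfl⟩ := LinearMap.dualEmbedding_surjective (topDualPairing ℝ X) φ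
  obtain ⟨g, hg, hgv⟩ := exists_dual_vector'' ℝ v
  have hu : r * ‖v‖ < u := by
    have := hφB (StrongDual.toWeakDual (r • g)) (by
      rw [mem_preimage, mem_closedBall_zero_iff]
      simpa [norm_smul, abs_of_nonneg hr] using mul_le_of_le_one_right hr hg)
    change (r • g) v < u at this
    rwa [smul_apply, smul_eq_mul, hgv] at this
  have hc : sSup ((fun S : StrongDual ℝ X => S (-v)) '' A) ≤ -c := by
    refine csSup_le (hne.image _) ?_
    rintro _ ⟨S, hS, rfl⟩
    have : c < S v := hφA _ ⟨S, hS, rfl⟩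
    simp only [map_neg]
    exact neg_le_neg this.le
  have := hsup (-v)
  rw [norm_neg] at this
  linarith

lemma le_norm_of_mem_pjComp {f : X → Y} {Jf : X → Set (X →L[ℝ] Y)} {x : X}
    {y : Y} (hxy : y ≠ f x) {α : ℝ} (hsurj : ∀ T ∈ convexHull ℝ (Jf x), Function.Surjective T)
    (hα : ∀ T ∈ convexHull ℝ (Jf x), α ≤ conorm T) {S : StrongDual ℝ X}
    (hS : S ∈ pjComp f Jf x y) : α ≤ ‖S‖ := by
  obtain ⟨p, hp, T, hT, rfl⟩ := hS
  obtain ⟨z, hz⟩ := hsurj T hT (f x - y)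
  exact le_norm_comp_of_norm_le_apply (mul_norm_le_norm_apply_of_le_conorm (hα T hT))
    (hz ▸ sub_ne_zero.2 hxy.symm) (hz ▸ norm_le_apply_of_mem_clarkeSubdiff_norm hp)

section LocalSurjectivity

variable [CompleteSpace X] {U : Set X} {f : X → Y} {Jf : X → Set (X →L[ℝ] Y)} {α : ℝ}

theorem ball_subset_image_closedBall (hf : ContinuousOn f U) (hcrc : ChainRuleCond f Jf U)
    (hα : 0 < α) (hnorm : ∀ x ∈ U, ∀ y, y ≠ f x → ∀ S ∈ pjComp f Jf x y, α ≤ ‖S‖) {x₀ : X}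
    {r : ℝ} (hr : 0 < r) (hball : closedBall x₀ r ⊆ U) :
    ball (f x₀) (α * r / 2) ⊆ f '' closedBall x₀ r := by
  intro y hy
  have : CompleteSpace (closedBall x₀ r) := isClosed_closedBall.completeSpace_coe
  obtain ⟨⟨xh, hxh⟩, h₁, h₂⟩ := exists_ekeland
    (g := fun z : closedBall x₀ r => ‖f z - y‖)
    (((hf.mono hball).domRestrict.sub continuous_const).norm)
    ⟨0, by rintro _ ⟨z, rfl⟩; exact norm_nonneg _⟩ (half_pos hα) ⟨x₀, mem_closedBall_self hr.le⟩
  simp only [Subtype.dist_eq] at h₁ h₂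
  have hnear : dist xh x₀ < r := by
    rw [mem_ball, dist_eq_norm'] at hy
    nlinarith [norm_nonneg (f xh - y)]
  refine ⟨xh, hxh, of_not_not fun hne => ?_⟩
  obtain ⟨hclosed, hconv, hpj⟩ := hcrc xh (hball hxh) y (Ne.symm hne)
  have hloc : ∀ᶠ z in 𝓝 xh, ‖f xh - y‖ ≤ ‖f z - y‖ + α / 2 * ‖z - xh‖ := by
    filter_upwards [isOpen_ball.mem_nhds hnear] with z hz
    simpa [dist_eq_norm] using h₂ ⟨z, ball_subset_closedBall hz⟩
  have hsup (v : X) :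
      -(α / 2 * ‖v‖) ≤ sSup ((fun S : StrongDual ℝ X => S v) '' pjComp f Jf xh y) :=
    (neg_mul_norm_le_diniUpper (half_pos hα).le hloc v).trans
      (by simpa using hpj.2 (ContinuousLinearMap.id ℝ ℝ) v)
  obtain ⟨S, hS, hSα⟩ := exists_mem_norm_le_of_forall_neg_mul_norm_le_sSup hpj.1 hconv hclosed
    (half_pos hα).le hsup
  linarith [hnorm xh (hball hxh) y (Ne.symm hne) S hS]

theorem isOpen_image_of_chainRuleCond (hf : ContinuousOn f U) (hcrc : ChainRuleCond f Jf U)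
    (hα : 0 < α) (hnorm : ∀ x ∈ U, ∀ y, y ≠ f x → ∀ S ∈ pjComp f Jf x y, α ≤ ‖S‖) {W : Set X}
    (hWU : W ⊆ U) (hW : IsOpen W) : IsOpen (f '' W) := by
  refine Metric.isOpen_iff.2 ?_
  rintro _ ⟨x₀, hx₀, rfl⟩
  obtain ⟨ε, hε, hεW⟩ := Metric.isOpen_iff.1 hW x₀ hx₀
  have hsub : closedBall x₀ (ε / 2) ⊆ W := (closedBall_subset_ball (half_lt_self hε)).trans hεW
  exact ⟨α * (ε / 2) / 2, by positivity, (ball_subset_image_closedBall hf hcrc hα hnorm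
    (half_pos hε) (hsub.trans hWU)).trans (image_mono hsub)⟩

end LocalSurjectivity

end

theorem global_inversion_convex_general
    {X Y : Type*} [NormedAddCommGroup X] [NormedSpace ℝ X] [CompleteSpace X]
    [NormedAddCommGroup Y] [NormedSpace ℝ Y]
    {U : Set X} (hUopen : IsOpen U) (hUconv : Convex ℝ U)
    {f : X → Y} (hf : ContinuousOn f U)
    {Jf : X → Set (X →L[ℝ] Y)} (hJf : ∀ x ∈ U, IsPseudoJacobianAt f (Jf x) x)
    (hcrc : ChainRuleCond f Jf U)
    (hiso : ∀ T ∈ convexHull ℝ (⋃ x ∈ U, Jf x), IsBanachIso T)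
    {α : ℝ} (hαpos : 0 < α)
    (hα : ∀ T ∈ convexHull ℝ (⋃ x ∈ U, Jf x), α ≤ conorm T) :
    IsOpen (f '' U) ∧
      (∀ W : Set X, W ⊆ U → IsOpen W → IsOpen (f '' W)) ∧
      Set.InjOn f U ∧
      ∀ u ∈ U, ∀ v ∈ U, ‖u - v‖ ≤ (1 / α) * ‖f u - f v‖ := by
  have hJU {x : X} (hx : x ∈ U) : convexHull ℝ (Jf x) ⊆ convexHull ℝ (⋃ x ∈ U, Jf x) :=
    convexHull_mono (subset_biUnion_of_mem hx)
  have hnorm (x : X) (hx : x ∈ U) (y : Y) (hy : y ≠ f x) (S : StrongDual ℝ X)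
      (hS : S ∈ pjComp f Jf x y) : α ≤ ‖S‖ :=
    le_norm_of_mem_pjComp hy (fun T hT => by
        obtain ⟨e, rfl⟩ := hiso T (hJU hx hT)
        exact e.surjective)
      (fun T hT => hα T (hJU hx hT)) hS
  have hopen {W : Set X} (hWU : W ⊆ U) (hW : IsOpen W) : IsOpen (f '' W) :=
    isOpen_image_of_chainRuleCond hf hcrc hαpos hnorm hWU hW
  have hest {u v : X} (hu : u ∈ U) (hv : v ∈ U) : α * ‖u - v‖ ≤ ‖f u - f v‖ :=
    mul_norm_sub_le_norm_sub_of_le_conorm hUconv hf hJf hα hu hv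
  refine ⟨hopen subset_rfl hUopen, fun W => hopen, fun u hu v hv huv => ?_, fun u hu v hv => ?_⟩
  · have := hest hu hv
    rw [huv, sub_self, norm_zero] at this
    exact sub_eq_zero.1 (norm_le_zero_iff.1 (nonpos_of_mul_nonpos_right this hαpos))
  · rw [one_div, ← div_eq_inv_mul, le_div_iff₀' hαpos]
    exact hest hu hv

/-- Global inversion on a convex open set: if `Jf` satisfies the chain rule condition,
every operator in `co Jf(U)` is an isomorphism and `α > 0` is a lower bound for their
co-norms, then `f(U)` is open, `f` is a homeomorphism from `U` onto `f(U)` (it is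
continuous, injective and open), and its inverse is `(1/α)`-Lipschitz. -/
theorem global_inversion_convex
    {X Y : Type*} [NormedAddCommGroup X] [NormedSpace ℝ X] [CompleteSpace X]
    [NormedAddCommGroup Y] [NormedSpace ℝ Y] [CompleteSpace Y]
    {U : Set X} (hUopen : IsOpen U) (hUconv : Convex ℝ U)
    {f : X → Y} (hf : ContinuousOn f U)
    {Jf : X → Set (X →L[ℝ] Y)} (hJf : ∀ x ∈ U, IsPseudoJacobianAt f (Jf x) x)
    (hcrc : ChainRuleCond f Jf U)
    (hiso : ∀ T ∈ convexHull ℝ (⋃ x ∈ U, Jf x), IsBanachIso T)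
    {α : ℝ} (hαpos : 0 < α)
    (hα : ∀ T ∈ convexHull ℝ (⋃ x ∈ U, Jf x), α ≤ conorm T) :
    IsOpen (f '' U) ∧
      (∀ W : Set X, W ⊆ U → IsOpen W → IsOpen (f '' W)) ∧
      Set.InjOn f U ∧
      ∀ u ∈ U, ∀ v ∈ U, ‖u - v‖ ≤ (1 / α) * ‖f u - f v‖ :=
  global_inversion_convex_general hUopen hUconv hf hJf hcrc hiso hαpos hα

end
end
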